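/- Let G be a connected finite simple graph of order n ≥ 13 with degree sequence d₁ ≤ ⋯ ≤ d_n satisfying the weak Chvátal condition (for all 1 ≤ i < n/2, d_i ≥ i + 1 or d_{n−i} ≥ n − i − 1), having at most one vertex of degree 1, and with m(G,2) > 2. Let L = {v ∈ V(G) : d(v) ≥ (n−1)/2}, let I be a set of maximum cardinality among all closures ⟨A⟩ of two-element sets A ⊆ V(G) under 2-neighbor bootstrap percolation that have nonempty intersection with L, and let U = V(G) ∖ I. Then L ∩ U is a clique, i.e., any two distinct vertices of L ∩ U are adjacent in G. -/
import Mathlib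


open Finset
open scoped Classical

/-- One step of the `r`-neighbor bootstrap percolation process: all currently
active vertices stay active, and every vertex with at least `r` active
neighbors becomes active. -/
noncomputable def bootStep {V : Type*} [Fintype V] (G : SimpleGraph V) (r : ℕ)
    (A : Finset V) : Finset V :=
  A ∪ Finset.univ.filter (fun v => r ≤ (G.neighborFinset v ∩ A).card)

/-- The closure of `A` under `r`-neighbor bootstrap percolation, i.e. `⋃ₜ Aₜ`.
Since the process is monotone on a finite vertex set, iterating `|V|` times
reaches the fixed point. -/
noncomputable def bootClosure {V : Type*} [Fintype V] (G : SimpleGraph V) (r : ℕ)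
    (A : Finset V) : Finset V :=
  (bootStep G r)^[Fintype.card V] A

/-- `G` `r`-percolates from the initially active set `A`. -/
def Percolates {V : Type*} [Fintype V] (G : SimpleGraph V) (r : ℕ)
    (A : Finset V) : Prop :=
  ∃ t : ℕ, (bootStep G r)^[t] A = Finset.univ

/-- `m(G, r)`: the minimum size of an `r`-contagious set in `G`. -/
noncomputable def minContagious {V : Type*} [Fintype V] (G : SimpleGraph V) (r : ℕ) : ℕ :=
  sInf {k : ℕ | ∃ A : Finset V, A.card = k ∧ Percolates G r A}

lemma subset_bootStep {V : Type*} [Fintype V] (G : SimpleGraph V) (r : ℕ) (A : Finset V) :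
    A ⊆ bootStep G r A :=
  Finset.subset_union_left

lemma subset_iterate_bootStep {V : Type*} [Fintype V] (G : SimpleGraph V) (r : ℕ)
    (A : Finset V) (k : ℕ) : A ⊆ (bootStep G r)^[k] A := by
  induction k with
  | zero => simp
  | succ k ih =>
    rw [Function.iterate_succ_apply']
    exact ih.trans (subset_bootStep G r _)

lemma iterate_fix_persist {V : Type*} [Fintype V] (G : SimpleGraph V) (r : ℕ)
    (A : Finset V) (j : ℕ) (hj : bootStep G r ((bootStep G r)^[j] A) = (bootStep G r)^[j] A) :
    ∀ m, j ≤ m → (bootStep G r)^[m] A = (bootStep G r)^[j] A := by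
  intro m hm
  obtain ⟨d, rfl⟩ := Nat.exists_eq_add_of_le hm
  induction d with
  | zero => simp
  | succ d ih =>
    have : j + (d + 1) = (j + d) + 1 := by omega
    rw [this, Function.iterate_succ_apply', ih (by omega), hj]

lemma bootClosure_fixed {V : Type*} [Fintype V] (G : SimpleGraph V) (r : ℕ) (A : Finset V) :
    bootStep G r (bootClosure G r A) = bootClosure G r A := by
  set f := bootStep G r with hf
  set N := Fintype.card V with hN
  by_contra h
  -- then no iterate up to N is a fixed point
  have hne : ∀ j ≤ N, f (f^[j] A) ≠ f^[j] A := by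
    intro j hj hfix
    exact h (by
      rw [bootClosure, ← hf, ← hN,
        iterate_fix_persist G r A j hfix N hj, hfix])
  have hcard : ∀ j, j ≤ N + 1 → j ≤ (f^[j] A).card := by
    intro j hj
    induction j with
    | zero => simp
    | succ j ih =>
      have h1 : f^[j] A ⊂ f^[j + 1] A := by
        rw [Function.iterate_succ_apply']
        exact (subset_bootStep G r _).ssubset_of_ne (Ne.symm (hne j (by omega)))
      have h2 := Finset.card_lt_card h1
      have := ih (by omega)
      omega
  have h1 := hcard (N + 1) le_rfl
  have h2 : (f^[N + 1] A).card ≤ N := by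
    rw [hN]; exact Finset.card_le_univ _
  omega

lemma bootStep_subset_bootClosure {V : Type*} [Fintype V] (G : SimpleGraph V) (r : ℕ)
    (A : Finset V) (hV : 1 ≤ Fintype.card V) :
    bootStep G r A ⊆ bootClosure G r A := by
  obtain ⟨m, hm⟩ := Nat.exists_eq_add_of_le hV
  rw [bootClosure, hm, Nat.add_comm, Function.iterate_add_apply,
    Function.iterate_one]
  exact subset_iterate_bootStep G r _ m

theorem stmt15 {V : Type*} [Fintype V] (G : SimpleGraph V)
    (hconn : G.Connected)
    (n : ℕ) (hcard : Fintype.card V = n) (hn : 13 ≤ n)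
    (e : Fin n ≃ V)
    (hmono : ∀ i j : Fin n, i ≤ j → G.degree (e i) ≤ G.degree (e j))
    (hchv : ∀ i : ℕ, ∀ h1 : 1 ≤ i, ∀ h2 : 2 * i < n,
      i + 1 ≤ G.degree (e ⟨i - 1, by omega⟩) ∨
      n - i - 1 ≤ G.degree (e ⟨n - i - 1, by omega⟩))
    (hdeg1 : (Finset.univ.filter (fun v => G.degree v = 1)).card ≤ 1)
    (hm : 2 < minContagious G 2)
    (L : Finset V) (hL : L = Finset.univ.filter (fun v => n - 1 ≤ 2 * G.degree v))
    (I : Finset V)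
    (hIcl : ∃ A : Finset V, A.card = 2 ∧ I = bootClosure G 2 A)
    (hIL : (I ∩ L).Nonempty)
    (hImax : ∀ A : Finset V, A.card = 2 → (bootClosure G 2 A ∩ L).Nonempty →
      (bootClosure G 2 A).card ≤ I.card) :
    ∀ u ∈ L ∩ (Finset.univ \ I), ∀ w ∈ L ∩ (Finset.univ \ I), u ≠ w → G.Adj u w := by
  intro u hu w hw huw
  by_contra hadj
  simp only [Finset.mem_inter, Finset.mem_sdiff, Finset.mem_univ, true_and] at hu hw
  obtain ⟨huL, huI⟩ := hu
  obtain ⟨hwL, hwI⟩ := hw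
  have hdu : n - 1 ≤ 2 * G.degree u := by
    have h := huL; rw [hL, Finset.mem_filter] at h; exact h.2
  have hdw : n - 1 ≤ 2 * G.degree w := by
    have h := hwL; rw [hL, Finset.mem_filter] at h; exact h.2
  have hV1 : 1 ≤ Fintype.card V := by omega
  obtain ⟨A, hA2, hIA⟩ := hIcl
  have hIfix : bootStep G 2 I = I := by rw [hIA]; exact bootClosure_fixed G 2 A
  -- a vertex outside I has at most one neighbor in I
  have hfew : ∀ v : V, v ∉ I → (G.neighborFinset v ∩ I).card ≤ 1 := by
    intro v hv
    by_contra h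
    apply hv
    rw [← hIfix, bootStep]
    exact Finset.mem_union_right _ (Finset.mem_filter.mpr ⟨Finset.mem_univ v, by omega⟩)
  -- the pair {u, w}
  have hpair : ({u, w} : Finset V).card = 2 := Finset.card_pair huw
  set J := bootClosure G 2 {u, w} with hJ
  have huJ : u ∈ J := subset_iterate_bootStep G 2 _ _ (Finset.mem_insert_self u {w})
  have hwJ : w ∈ J := subset_iterate_bootStep G 2 _ _
    (Finset.mem_insert_of_mem (Finset.mem_singleton_self w))
  have hJle : J.card ≤ I.card := hImax {u, w} hpair ⟨u, Finset.mem_inter.mpr ⟨huJ, huL⟩⟩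
  -- common neighbors belong to J
  set X := G.neighborFinset u ∩ G.neighborFinset w with hX
  have hXJ : X ⊆ J := by
    intro x hx
    rw [hX, Finset.mem_inter, SimpleGraph.mem_neighborFinset,
      SimpleGraph.mem_neighborFinset] at hx
    apply bootStep_subset_bootClosure G 2 _ hV1
    rw [bootStep]
    apply Finset.mem_union_right
    refine Finset.mem_filter.mpr ⟨Finset.mem_univ x, ?_⟩
    have hsub : ({u, w} : Finset V) ⊆ G.neighborFinset x ∩ {u, w} := by
      intro y hy
      rcases Finset.mem_insert.mp hy with rfl | hy
      · exact Finset.mem_inter.mpr ⟨(SimpleGraph.mem_neighborFinset _ _ _).mpr hx.1.symm, hy⟩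
      · rw [Finset.mem_singleton] at hy
        subst hy
        exact Finset.mem_inter.mpr
          ⟨(SimpleGraph.mem_neighborFinset _ _ _).mpr hx.2.symm,
            Finset.mem_insert_of_mem (Finset.mem_singleton_self _)⟩
    calc 2 = ({u, w} : Finset V).card := hpair.symm
      _ ≤ _ := Finset.card_le_card hsub
  have huX : u ∉ X := by
    rw [hX, Finset.mem_inter, SimpleGraph.mem_neighborFinset]
    intro h
    exact G.irrefl h.1
  have hwX : w ∉ X := by
    rw [hX, Finset.mem_inter, SimpleGraph.mem_neighborFinset]
    intro h
    exact hadj h.1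
  -- lower bound on J.card
  have hJge : 2 + X.card ≤ J.card := by
    have hsub : insert u (insert w X) ⊆ J := by
      intro y hy
      rcases Finset.mem_insert.mp hy with rfl | hy
      · exact huJ
      rcases Finset.mem_insert.mp hy with rfl | hy
      · exact hwJ
      · exact hXJ hy
    have hc : (insert u (insert w X)).card = 2 + X.card := by
      rw [Finset.card_insert_of_notMem (by
          simp only [Finset.mem_insert]
          push_neg
          exact ⟨huw, huX⟩),
        Finset.card_insert_of_notMem hwX]
      omega
    calc 2 + X.card = (insert u (insert w X)).card := hc.symm
      _ ≤ J.card := Finset.card_le_card hsub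
  -- counting common neighbors
  set U' := (Finset.univ \ I : Finset V) with hU'
  set Nu := G.neighborFinset u ∩ U' with hNu
  set Nw := G.neighborFinset w ∩ U' with hNw
  have hNuge : G.degree u ≤ Nu.card + 1 := by
    have hsplit : G.neighborFinset u ⊆ Nu ∪ (G.neighborFinset u ∩ I) := by
      intro x hx
      by_cases hxI : x ∈ I
      · exact Finset.mem_union_right _ (Finset.mem_inter.mpr ⟨hx, hxI⟩)
      · exact Finset.mem_union_left _ (Finset.mem_inter.mpr ⟨hx,
          Finset.mem_sdiff.mpr ⟨Finset.mem_univ x, hxI⟩⟩)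
    have h1 := Finset.card_le_card hsplit
    have h2 := Finset.card_union_le Nu (G.neighborFinset u ∩ I)
    have h3 := hfew u huI
    rw [← G.card_neighborFinset_eq_degree]
    omega
  have hNwge : G.degree w ≤ Nw.card + 1 := by
    have hsplit : G.neighborFinset w ⊆ Nw ∪ (G.neighborFinset w ∩ I) := by
      intro x hx
      by_cases hxI : x ∈ I
      · exact Finset.mem_union_right _ (Finset.mem_inter.mpr ⟨hx, hxI⟩)
      · exact Finset.mem_union_left _ (Finset.mem_inter.mpr ⟨hx,
          Finset.mem_sdiff.mpr ⟨Finset.mem_univ x, hxI⟩⟩)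
    have h1 := Finset.card_le_card hsplit
    have h2 := Finset.card_union_le Nw (G.neighborFinset w ∩ I)
    have h3 := hfew w hwI
    rw [← G.card_neighborFinset_eq_degree]
    omega
  -- Nu ∪ Nw avoids u and w and lies in U'
  have hunion : Nu ∪ Nw ⊆ U' \ {u, w} := by
    intro x hx
    refine Finset.mem_sdiff.mpr ⟨?_, ?_⟩
    · rcases Finset.mem_union.mp hx with h | h
      · exact (Finset.mem_inter.mp h).2
      · exact (Finset.mem_inter.mp h).2
    · simp only [Finset.mem_insert, Finset.mem_singleton]
      push_neg
      rcases Finset.mem_union.mp hx with h | h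
      · have hadjx := (SimpleGraph.mem_neighborFinset _ _ _).mp (Finset.mem_inter.mp h).1
        constructor
        · rintro rfl; exact G.irrefl hadjx
        · rintro rfl; exact hadj hadjx
      · have hadjx := (SimpleGraph.mem_neighborFinset _ _ _).mp (Finset.mem_inter.mp h).1
        constructor
        · rintro rfl; exact hadj hadjx.symm
        · rintro rfl; exact G.irrefl hadjx
  have hpairU : ({u, w} : Finset V) ⊆ U' := by
    intro y hy
    rcases Finset.mem_insert.mp hy with rfl | hy
    · exact Finset.mem_sdiff.mpr ⟨Finset.mem_univ _, huI⟩
    · rw [Finset.mem_singleton] at hy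
      subst hy
      exact Finset.mem_sdiff.mpr ⟨Finset.mem_univ _, hwI⟩
  have hUcard : (U' \ {u, w}).card + 2 = U'.card := by
    rw [Finset.card_sdiff_of_subset hpairU, hpair]
    have : 2 ≤ U'.card := hpair ▸ Finset.card_le_card hpairU
    omega
  have hU'card : U'.card + I.card = n := by
    rw [hU', Finset.card_sdiff_of_subset (Finset.subset_univ I), Finset.card_univ, hcard]
    have : I.card ≤ n := hcard ▸ Finset.card_le_univ I
    omega
  have hie : (Nu ∩ Nw).card + (Nu ∪ Nw).card = Nu.card + Nw.card :=
    Finset.card_inter_add_card_union Nu Nw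
  have hNX : Nu ∩ Nw ⊆ X := by
    intro x hx
    rw [Finset.mem_inter] at hx
    exact Finset.mem_inter.mpr ⟨(Finset.mem_inter.mp hx.1).1, (Finset.mem_inter.mp hx.2).1⟩
  have h1 : (Nu ∩ Nw).card ≤ X.card := Finset.card_le_card hNX
  have h2 : (Nu ∪ Nw).card ≤ (U' \ {u, w}).card := Finset.card_le_card hunion
  omega
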